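/- Let F be a free group, c₁, c₂, n ≥ 1 with n−1 ≤ c₂ ≤ c₁. Then [γ_{c₁+1}(F), γ_{c₂+1}(F)] is generated, modulo H = [γ_{c₁+n+1}(F), γ_{c₂+1}(F)]·[γ_{c₂+n+1}(F), γ_{c₁+1}(F)], by the commutators [β,α] where β, α are basic commutators on the free generators with β > α, c₁+1 ≤ wt(β) ≤ c₁+n, c₂+1 ≤ wt(α) ≤ c₂+n. -/

import Mathlib

open scoped commutatorElement

/-- Formal commutators (bracket words) on a set `X` of generators. -/
inductive FormalComm (X : Type) : Type
  | of : X → FormalComm X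
  | comm : FormalComm X → FormalComm X → FormalComm X

namespace FormalComm

/-- The weight of a formal commutator. -/
def weight {X : Type} : FormalComm X → ℕ
  | of _ => 1
  | comm b a => weight b + weight a

/-- Basic commutators with respect to a strict order `r` on formal commutators:
generators are basic of weight 1; `[b,a]` is basic if `b`, `a` are basic, `a < b`,
and whenever `b = [b₁,b₂]` one has `b₂ ≤ a`. -/
inductive IsBasic {X : Type} (r : FormalComm X → FormalComm X → Prop) : FormalComm X → Prop
  | of (x : X) : IsBasic r (.of x)
  | comm (b a : FormalComm X) : IsBasic r b → IsBasic r a → r a b →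
      (∀ b₁ b₂, b = .comm b₁ b₂ → ¬ r a b₂) → IsBasic r (.comm b a)

/-- Evaluation of a formal commutator in the free group on `X`. -/
def eval {X : Type} : FormalComm X → FreeGroup X
  | of x => FreeGroup.of x
  | comm b a => ⁅eval b, eval a⁆

end FormalComm

/-- The Witt number `χ_n(d) = (1/n) ∑_{m ∣ n} μ(m) d^{n/m}`. -/
def witt (n d : ℕ) : ℕ :=
  ((∑ m ∈ n.divisors, ArithmeticFunction.moebius m * (d : ℤ) ^ (n / m)) / (n : ℤ)).toNat

/-!
Modulo `γ_{k+2}`, P. Hall's collection process writes every element of `γ_{k+1}(F)` as a product of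
basic commutators of weight `k + 1`. For basic `a > b` with `wt a + wt b = k + 1`, either `[a, b]`
is basic, or `a = [a₁, a₂]` with `b < a₂`, and then the Hall–Witt identity trades `[a, b]` for
`[[b, a₁], a₂]` and `[[b, a₂], a₁]`; expanding the inner commutators (of smaller weight) leaves
commutators of pairs of basic commutators whose smaller entry exceeds `b`, so a downward induction
on `b` terminates once the alphabet is finite, which costs nothing since every element of `F`
involves finitely many generators. Iterating, `γ_{c+1}(F)` is generated modulo `γ_{c+n+1}(F)` by
the basic commutators of weights `c + 1, …, c + n`.

Since `n ≤ c₂ + 1 ≤ c₁ + 1`, the triple commutators `[[γ_{c₁+1}, γ_{c₂+1}], γ_{cᵢ+1}]` lie in `H`,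
so modulo `H` the commutator of a product is the product of the commutators, and
`[γ_{c₁+1}, γ_{c₂+1}]` is generated modulo `H` by the commutators of the two families of basic
commutators; `[β, α] = [α, β]⁻¹` lets one keep only `β > α`.
-/

open Subgroup

section CommutatorCalculus

variable {G : Type*} [Group G]

-- `γ k` is the paper's `γ_{k+1}`.
local notation "γ" => Subgroup.lowerCentralSeries (⊤ : Subgroup G)

theorem Subgroup.commutator_commutator_le_of_rotate {H₁ H₂ H₃ N : Subgroup G} [N.Normal]
    (h₁ : ⁅⁅H₂, H₃⁆, H₁⁆ ≤ N) (h₂ : ⁅⁅H₃, H₁⁆, H₂⁆ ≤ N) : ⁅⁅H₁, H₂⁆, H₃⁆ ≤ N := by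
  rw [← QuotientGroup.ker_mk' N, ← map_eq_bot_iff] at h₁ h₂ ⊢
  simp only [map_commutator] at h₁ h₂ ⊢
  exact commutator_commutator_eq_bot_of_rotate h₁ h₂

theorem Subgroup.commutator_lowerCentralSeries_le (i j : ℕ) : ⁅γ i, γ j⁆ ≤ γ (i + j + 1) := by
  induction j generalizing i with
  | zero => rfl
  | succ j ih =>
    rw [lowerCentralSeries_succ ⊤ j, commutator_comm]
    apply commutator_commutator_le_of_rotate
    · rw [commutator_comm ⊤, ← lowerCentralSeries_succ]
      exact (ih (i + 1)).trans
        (lowerCentralSeries_antitone _ (by omega : i + (j + 1) + 1 ≤ i + 1 + j + 1))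
    · exact (commutator_mono (ih i) le_rfl).trans
        (lowerCentralSeries_antitone _ (by omega : i + (j + 1) + 1 ≤ i + j + 1 + 1))

theorem Subgroup.commutator_mem_lowerCentralSeries {i j k : ℕ} {x y : G}
    (hx : x ∈ γ i) (hy : y ∈ γ j) (hk : k ≤ i + j + 1) : ⁅x, y⁆ ∈ γ k :=
  lowerCentralSeries_antitone _ hk
    (commutator_lowerCentralSeries_le i j (commutator_mem_commutator hx hy))

theorem Subgroup.commutator_commutator_lowerCentralSeries_le {i j l k : ℕ}
    (hk : k ≤ i + j + l + 2) : ⁅⁅γ i, γ j⁆, γ l⁆ ≤ γ k :=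
  (commutator_mono (commutator_lowerCentralSeries_le i j) le_rfl).trans
    ((commutator_lowerCentralSeries_le _ l).trans (lowerCentralSeries_antitone _ (by omega)))

theorem Subgroup.map_lowerCentralSeries_top_le {H : Type*} [Group H] (f : G →* H) (k : ℕ) :
    (γ k).map f ≤ (⊤ : Subgroup H).lowerCentralSeries k :=
  (map_lowerCentralSeries ⊤ f k).le.trans (lowerCentralSeries_mono k le_top)

theorem Subgroup.mem_lowerCentralSeries_of_leftInverse {H : Type*} [Group H] {f : G →* H}
    {ρ : H →* G} (h : Function.LeftInverse ρ f) {k : ℕ} {g : G}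
    (hg : f g ∈ (⊤ : Subgroup H).lowerCentralSeries k) : g ∈ γ k :=
  h g ▸ (map_lowerCentralSeries_top_le ρ k (mem_map_of_mem ρ hg) : ρ (f g) ∈ γ k)

variable {A B K : Subgroup G}

theorem Subgroup.commutator_mem_of_mem_closure_left {s : Set G} {y : G} (hs : s ⊆ A)
    (hy : y ∈ B) (hK : ⁅⁅A, B⁆, A⁆ ≤ K) (h : ∀ x ∈ s, ⁅x, y⁆ ∈ K) {x : G}
    (hx : x ∈ closure s) : ⁅x, y⁆ ∈ K := by
  have hsA : closure s ≤ A := closure_le _ |>.mpr hs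
  induction hx using closure_induction with
  | mem x hx => exact h x hx
  | one => simp
  | mul x₁ x₂ hx₁ hx₂ ih₁ ih₂ =>
    have e : ⁅x₁ * x₂, y⁆ = ⁅x₂, y⁆ * ⁅⁅x₂, y⁆⁻¹, x₁⁆ * ⁅x₁, y⁆ := by group
    rw [e]
    refine mul_mem (mul_mem ih₂ (hK ?_)) ih₁
    exact commutator_mem_commutator (inv_mem (commutator_mem_commutator (hsA hx₂) hy)) (hsA hx₁)
  | inv x hx ih =>
    have e : ⁅x⁻¹, y⁆ = ⁅x, y⁆⁻¹ * ⁅⁅x, y⁆, x⁻¹⁆ := by group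
    rw [e]
    refine mul_mem (inv_mem ih) (hK ?_)
    exact commutator_mem_commutator (commutator_mem_commutator (hsA hx) hy) (inv_mem (hsA hx))

theorem Subgroup.commutator_closure_le {s t : Set G} (hs : s ⊆ A) (ht : t ⊆ B)
    (hA : ⁅⁅A, B⁆, A⁆ ≤ K) (hB : ⁅⁅A, B⁆, B⁆ ≤ K) (h : ∀ x ∈ s, ∀ y ∈ t, ⁅x, y⁆ ∈ K) :
    ⁅closure s, closure t⁆ ≤ K := by
  rw [commutator_le]
  intro x hx y hy
  refine commutator_mem_of_mem_closure_left hs (closure_le _ |>.mpr ht hy) hA (fun x hx => ?_) hx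
  rw [← commutatorElement_inv]
  refine inv_mem (commutator_mem_of_mem_closure_left ht (hs hx) ?_ (fun y hy => ?_) hy)
  · rwa [commutator_comm B]
  · rw [← commutatorElement_inv]
    exact inv_mem (h x hx y hy)

theorem commutatorElement_conj_right_of_commutatorElement_eq_one {a b c : G}
    (h : ⁅a, ⁅c⁻¹, b⁆⁆ = 1) : ⁅a, b * c * b⁻¹⁆ = ⁅a, c⁆ :=
  calc ⁅a, b * c * b⁻¹⁆ = ⁅a, c⁆ * (c * ⁅a, ⁅c⁻¹, b⁆⁆ * c⁻¹) := by group
    _ = ⁅a, c⁆ := by rw [h]; group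

theorem commutatorElement_inv_left_of_commutatorElement_eq_one {x y : G}
    (h : ⁅⁅y, x⁆⁻¹, x⁻¹⁆ = 1) : ⁅x⁻¹, y⁆ = ⁅x, y⁆⁻¹ :=
  calc ⁅x⁻¹, y⁆ = ⁅y, x⁆ * ⁅⁅y, x⁆⁻¹, x⁻¹⁆ := by group
    _ = ⁅x, y⁆⁻¹ := by rw [h, mul_one, commutatorElement_inv]

theorem Subgroup.commutator_commutator_mem_of_rotate {p q t : ℕ} {u v s : G}
    (hu : u ∈ γ p) (hv : v ∈ γ q) (hs : s ∈ γ t) (hK : γ (p + q + t + 3) ≤ K)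
    (h₁ : ⁅⁅s, u⁆, v⁆ ∈ K) (h₂ : ⁅⁅s, v⁆, u⁆ ∈ K) : ⁅⁅u, v⁆, s⁆ ∈ K := by
  set π := QuotientGroup.mk' (γ (p + q + t + 3))
  have hπ : ∀ {x y : G} {i j : ℕ}, x ∈ γ i → y ∈ γ j → p + q + t + 3 ≤ i + j + 1 →
      π ⁅x, y⁆ = 1 := fun hx hy hk =>
    (QuotientGroup.eq_one_iff _).mpr (commutator_mem_lowerCentralSeries hx hy hk)
  suffices π ⁅⁅u, v⁆, s⁆ ∈ K.map π by
    rwa [← mem_comap, comap_map_eq, QuotientGroup.ker_mk', sup_eq_left.mpr hK] at this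
  have huv := commutator_mem_lowerCentralSeries hu hv le_rfl
  have hvs := commutator_mem_lowerCentralSeries hv hs le_rfl
  have hsu := commutator_mem_lowerCentralSeries hs hu le_rfl
  have hsv := commutator_mem_lowerCentralSeries hs hv le_rfl
  -- Mathlib's Hall–Witt identity carries conjugations, which vanish modulo `γ (p + q + t + 3)`
  have jacobi : π ⁅⁅u, v⁆, s⁆ * π ⁅⁅v, s⁆, u⁆ * π ⁅⁅s, u⁆, v⁆ = 1 := by
    have hw := commutatorElement_commutatorElement_conj_mul (π u) (π v) (π s)
    simp only [map_commutatorElement]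
    rwa [commutatorElement_conj_right_of_commutatorElement_eq_one,
      commutatorElement_conj_right_of_commutatorElement_eq_one,
      commutatorElement_conj_right_of_commutatorElement_eq_one] at hw
    · simpa only [map_commutatorElement, map_inv] using
        hπ hsu (commutator_mem_lowerCentralSeries (inv_mem hv) hu le_rfl) (by omega)
    · simpa only [map_commutatorElement, map_inv] using
        hπ hvs (commutator_mem_lowerCentralSeries (inv_mem hu) hs le_rfl) (by omega)
    · simpa only [map_commutatorElement, map_inv] using
        hπ huv (commutator_mem_lowerCentralSeries (inv_mem hs) hv le_rfl) (by omega)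
  have hinv : π ⁅⁅v, s⁆, u⁆ = (π ⁅⁅s, v⁆, u⁆)⁻¹ := by
    simp only [map_commutatorElement]
    rw [← commutatorElement_inv (π s), commutatorElement_inv_left_of_commutatorElement_eq_one]
    simpa only [map_commutatorElement, map_inv] using
      hπ (inv_mem (commutator_mem_lowerCentralSeries hu hsv le_rfl)) (inv_mem hsv) (by omega)
  rw [hinv] at jacobi
  have hrot : π ⁅⁅u, v⁆, s⁆ = (π ⁅⁅s, u⁆, v⁆)⁻¹ * π ⁅⁅s, v⁆, u⁆ :=
    calc _ = π ⁅⁅u, v⁆, s⁆ * (π ⁅⁅s, v⁆, u⁆)⁻¹ * π ⁅⁅s, u⁆, v⁆ *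
          ((π ⁅⁅s, u⁆, v⁆)⁻¹ * π ⁅⁅s, v⁆, u⁆) := by group
      _ = _ := by rw [jacobi, one_mul]
  rw [hrot]
  exact mul_mem (inv_mem (mem_map_of_mem π h₁)) (mem_map_of_mem π h₂)

end CommutatorCalculus

theorem FreeGroup.exists_finset_mem_range_map {X : Type*} (g : FreeGroup X) :
    ∃ s : Finset X, g ∈ (FreeGroup.map ((↑) : s → X)).range := by
  have hmono : Monotone fun s : Finset X => (FreeGroup.map ((↑) : s → X)).range := by
    intro s t hst
    simp only [FreeGroup.range_map, Subtype.range_coe_subtype]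
    exact closure_mono (Set.image_mono hst)
  have htop :
      (⊤ : Subgroup (FreeGroup X)) ≤ ⨆ s : Finset X, (FreeGroup.map ((↑) : s → X)).range := by
    rw [← FreeGroup.closure_range_of, closure_le]
    rintro _ ⟨x, rfl⟩
    exact mem_iSup_of_mem {x} ⟨FreeGroup.of ⟨x, Finset.mem_singleton_self x⟩, FreeGroup.map.of⟩
  exact (mem_iSup_of_directed hmono.directed_le).mp (htop (mem_top g))

theorem FreeGroup.exists_leftInverse_map_subtype_val {X : Type*} (s : Finset X) :
    ∃ ρ : FreeGroup X →* FreeGroup s, Function.LeftInverse ρ (FreeGroup.map ((↑) : s → X)) := by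
  classical
  let ρ : FreeGroup X →* FreeGroup s :=
    FreeGroup.lift fun x => if hx : x ∈ s then FreeGroup.of ⟨x, hx⟩ else 1
  refine ⟨ρ, fun g => ?_⟩
  have : ρ.comp (FreeGroup.map ((↑) : s → X)) = MonoidHom.id _ :=
    FreeGroup.ext_hom _ _ fun x => by simp [ρ, x.2]
  exact DFunLike.congr_fun this g

namespace FormalComm

variable {X Y : Type}

local notation "γ" => Subgroup.lowerCentralSeries (⊤ : Subgroup (FreeGroup X))

theorem weight_pos (t : FormalComm X) : 0 < t.weight := by
  induction t with
  | of x => exact Nat.one_pos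
  | comm b a ihb _ => exact Nat.add_pos_left ihb _

theorem eval_mem_lowerCentralSeries (t : FormalComm X) : t.eval ∈ γ (t.weight - 1) := by
  induction t with
  | of x => exact mem_top _
  | comm b a ihb iha =>
    have := a.weight_pos
    have := b.weight_pos
    exact commutator_mem_lowerCentralSeries ihb iha (by simp only [weight]; omega)

theorem eval_mem_lowerCentralSeries_of_lt {t : FormalComm X} {k : ℕ} (h : k < t.weight) :
    t.eval ∈ γ k :=
  Subgroup.lowerCentralSeries_antitone _ (by omega) t.eval_mem_lowerCentralSeries

theorem finite_setOf_weight_le [Finite X] (w : ℕ) :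
    {t : FormalComm X | t.weight ≤ w}.Finite := by
  induction w with
  | zero => exact Set.finite_empty.subset fun t ht => (t.weight_pos.ne' (Nat.le_zero.mp ht)).elim
  | succ w ih =>
    refine ((Set.finite_range of).union (ih.image2 comm ih)).subset ?_
    rintro (x | ⟨b, a⟩) ht
    · exact Or.inl ⟨x, rfl⟩
    · have := a.weight_pos
      have := b.weight_pos
      have ht : b.weight + a.weight ≤ w + 1 := ht
      exact Or.inr
        (Set.mem_image2_of_mem (show b.weight ≤ w by omega) (show a.weight ≤ w by omega))

def map (f : X → Y) : FormalComm X → FormalComm Y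
  | of x => of (f x)
  | comm b a => comm (map f b) (map f a)

@[simp]
theorem weight_map (f : X → Y) (t : FormalComm X) : (t.map f).weight = t.weight := by
  induction t with
  | of x => rfl
  | comm b a ihb iha => simp only [map, weight, ihb, iha]

theorem eval_map (f : X → Y) (t : FormalComm X) : (t.map f).eval = FreeGroup.map f t.eval := by
  induction t with
  | of x => simp [map, eval]
  | comm b a ihb iha => simp only [map, eval, ihb, iha, map_commutatorElement]

theorem map_injective {f : X → Y} (hf : Function.Injective f) :
    Function.Injective (map f) := by
  intro a
  induction a with
  | of x => rintro (y | _) h <;> simp_all [map, hf.eq_iff]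
  | comm b a ihb iha =>
    rintro (y | ⟨c, d⟩) h
    · simp [map] at h
    · simp only [map, comm.injEq] at h
      rw [ihb h.1, iha h.2]

theorem IsBasic.map {f : X → Y} {r : FormalComm Y → FormalComm Y → Prop} {t : FormalComm X}
    (h : IsBasic (FormalComm.map f ⁻¹'o r) t) : IsBasic r (t.map f) := by
  induction h with
  | of x => exact IsBasic.of (f x)
  | comm b a _ _ hab hcond ihb iha =>
    refine IsBasic.comm _ _ ihb iha hab ?_
    rintro b₁ b₂ heq
    cases b with
    | of x => simp [FormalComm.map] at heq
    | comm c d =>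
      simp only [FormalComm.map, comm.injEq] at heq
      exact heq.2 ▸ hcond c d rfl

def basicSet (r : FormalComm X → FormalComm X → Prop) (W : Set ℕ) : Set (FreeGroup X) :=
  eval '' {t | IsBasic r t ∧ t.weight ∈ W}

def basicCommutatorSet (r : FormalComm X → FormalComm X → Prop) (c₁ c₂ n : ℕ) :
    Set (FreeGroup X) :=
  {g | ∃ β α : FormalComm X,
    g = ⁅β.eval, α.eval⁆ ∧ IsBasic r β ∧ IsBasic r α ∧ r α β ∧
    c₁ + 1 ≤ β.weight ∧ β.weight ≤ c₁ + n ∧ c₂ + 1 ≤ α.weight ∧ α.weight ≤ c₂ + n}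

theorem weight_le_of_rel {r : FormalComm X → FormalComm X → Prop} [IsStrictOrder _ r]
    (hwt : ∀ a b : FormalComm X, a.weight < b.weight → r a b) {a b : FormalComm X}
    (h : r a b) : a.weight ≤ b.weight :=
  not_lt.mp fun hlt => asymm h (hwt b a hlt)

variable {r : FormalComm X → FormalComm X → Prop}

theorem eval_mem_basicSet {t : FormalComm X} {W : Set ℕ} (ht : IsBasic r t)
    (hW : t.weight ∈ W) : t.eval ∈ basicSet r W :=
  ⟨t, ⟨ht, hW⟩, rfl⟩

theorem basicSet_mono {W W' : Set ℕ} (h : W ⊆ W') : basicSet r W ⊆ basicSet r W' :=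
  Set.image_mono fun _ ht => ⟨ht.1, h ht.2⟩

theorem closure_basicSet_le {W : Set ℕ} {k : ℕ} (h : ∀ w ∈ W, k < w) :
    closure (basicSet r W) ≤ γ k :=
  (closure_le _).mpr <| by
    rintro _ ⟨t, ⟨-, hw⟩, rfl⟩
    exact eval_mem_lowerCentralSeries_of_lt (h _ hw)

theorem image_map_basicSet_subset (f : X → Y) (r : FormalComm Y → FormalComm Y → Prop)
    (W : Set ℕ) : FreeGroup.map f '' basicSet (map f ⁻¹'o r) W ⊆ basicSet r W := by
  rintro _ ⟨_, ⟨t, ⟨ht, hw⟩, rfl⟩, rfl⟩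
  exact ⟨t.map f, ⟨ht.map, by rwa [weight_map]⟩, eval_map f t⟩

theorem commutator_eval_mem_of_trichotomous [Std.Trichotomous r] {K : Subgroup (FreeGroup X)}
    {a b : FormalComm X} (hab : r a b → ⁅b.eval, a.eval⁆ ∈ K)
    (hba : r b a → ⁅a.eval, b.eval⁆ ∈ K) : ⁅a.eval, b.eval⁆ ∈ K := by
  rcases trichotomous_of r a b with h | rfl | h
  · rw [← commutatorElement_inv]
    exact inv_mem (hab h)
  · rw [commutatorElement_self]
    exact one_mem K
  · exact hba h

theorem closure_basicCommutatorSet_le (c₁ c₂ n : ℕ) :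
    closure (basicCommutatorSet r c₁ c₂ n) ≤ ⁅γ c₁, γ c₂⁆ := by
  rw [closure_le]
  rintro _ ⟨β, α, rfl, -, -, -, hβ, -, hα, -⟩
  exact commutator_mem_commutator (eval_mem_lowerCentralSeries_of_lt (by omega))
    (eval_mem_lowerCentralSeries_of_lt (by omega))

theorem commutator_commutator_eval_mem_closure_basicSet_sup {k : ℕ}
    (hall : ∀ j < k, γ j ≤ closure (basicSet r {j + 1}) ⊔ γ (j + 1)) {b e t : FormalComm X}
    (hsum : b.weight + e.weight + t.weight = k + 1)
    (h : ∀ β, IsBasic r β → β.weight = b.weight + e.weight →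
      ⁅β.eval, t.eval⁆ ∈ closure (basicSet r {k + 1}) ⊔ γ (k + 1)) :
    ⁅⁅b.eval, e.eval⁆, t.eval⁆ ∈ closure (basicSet r {k + 1}) ⊔ γ (k + 1) := by
  set s := b.weight + e.weight
  have := b.weight_pos
  have := e.weight_pos
  have := t.weight_pos
  have hbe : ⁅b.eval, e.eval⁆ ∈ closure (basicSet r {s} ∪ γ s) := by
    rw [Subgroup.closure_union, closure_eq, show s = s - 1 + 1 by omega]
    exact hall (s - 1) (by omega) (commutator_mem_lowerCentralSeries
      b.eval_mem_lowerCentralSeries e.eval_mem_lowerCentralSeries (by omega))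
  have hγ : γ (k + 1) ≤ closure (basicSet r {k + 1}) ⊔ γ (k + 1) := le_sup_right
  refine commutator_closure_le (A := γ (s - 1)) (B := γ (t.weight - 1)) (t := {t.eval}) ?_ ?_
    ((commutator_commutator_lowerCentralSeries_le (by omega)).trans hγ)
    ((commutator_commutator_lowerCentralSeries_le (by omega)).trans hγ) ?_
    (commutator_mem_commutator hbe (mem_closure_singleton_self _))
  · exact Set.union_subset (subset_closure.trans
      (closure_basicSet_le (by simp only [Set.mem_singleton_iff, forall_eq]; omega)))
      (Subgroup.lowerCentralSeries_antitone _ (by omega))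
  · simpa using t.eval_mem_lowerCentralSeries
  · rintro x (⟨β, ⟨hβ, hw⟩, rfl⟩ | hx) _ rfl
    · exact h β hβ hw
    · exact hγ (commutator_mem_lowerCentralSeries hx t.eval_mem_lowerCentralSeries (by omega))

variable [IsStrictTotalOrder (FormalComm X) r]

theorem commutator_eval_mem_closure_basicSet_sup_of_forall_rel
    (hwt : ∀ a b : FormalComm X, a.weight < b.weight → r a b) {k : ℕ}
    (hall : ∀ j < k, γ j ≤ closure (basicSet r {j + 1}) ⊔ γ (j + 1))
    {b : FormalComm X} (hb : IsBasic r b)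
    (ih : ∀ x y, IsBasic r x → IsBasic r y → r b x → r b y → x.weight + y.weight = k + 1 →
      ⁅x.eval, y.eval⁆ ∈ closure (basicSet r {k + 1}) ⊔ γ (k + 1))
    {a : FormalComm X} (ha : IsBasic r a) (hba : r b a) (hab : a.weight + b.weight = k + 1) :
    ⁅a.eval, b.eval⁆ ∈ closure (basicSet r {k + 1}) ⊔ γ (k + 1) := by
  have hbasic :
      IsBasic r (comm a b) → ⁅a.eval, b.eval⁆ ∈ closure (basicSet r {k + 1}) ⊔ γ (k + 1) := fun h =>
    mem_sup_left (subset_closure (eval_mem_basicSet h hab))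
  rcases ha with x | ⟨a₁, a₂, ha₁, ha₂, h₂₁, hcond⟩
  · exact hbasic (.comm _ _ (.of x) hb hba (by rintro _ _ ⟨⟩))
  by_cases hb₂ : ¬r b a₂
  · exact hbasic (.comm _ _ (.comm _ _ ha₁ ha₂ h₂₁ hcond) hb hba (by rintro _ _ ⟨⟩; exact hb₂))
  rw [not_not] at hb₂
  have hb₁ : r b a₁ := _root_.trans hb₂ h₂₁
  have := a₁.weight_pos
  have := a₂.weight_pos
  have := b.weight_pos
  simp only [weight] at hab
  refine commutator_commutator_mem_of_rotate a₁.eval_mem_lowerCentralSeries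
    a₂.eval_mem_lowerCentralSeries b.eval_mem_lowerCentralSeries
    ((Subgroup.lowerCentralSeries_antitone _ (by omega)).trans le_sup_right) ?_ ?_
  · refine commutator_commutator_eval_mem_closure_basicSet_sup hall (by omega) fun β hβ hw => ?_
    exact ih β a₂ hβ ha₂ (hwt _ _ (by omega)) hb₂ (by omega)
  · refine commutator_commutator_eval_mem_closure_basicSet_sup hall (by omega) fun β hβ hw => ?_
    exact ih β a₁ hβ ha₁ (hwt _ _ (by omega)) hb₁ (by omega)

theorem commutator_eval_mem_closure_basicSet_sup [Finite X]
    (hwt : ∀ a b : FormalComm X, a.weight < b.weight → r a b)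
    {k : ℕ} (hall : ∀ j < k, γ j ≤ closure (basicSet r {j + 1}) ⊔ γ (j + 1))
    {a b : FormalComm X} (ha : IsBasic r a) (hb : IsBasic r b) (hab : a.weight + b.weight = k + 1) :
    ⁅a.eval, b.eval⁆ ∈ closure (basicSet r {k + 1}) ⊔ γ (k + 1) := by
  set K := closure (basicSet r {k + 1}) ⊔ γ (k + 1)
  -- downward induction on `b`, along `r` restricted to the finite set of weight `≤ k + 1`
  have key : ∀ b ∈ {t : FormalComm X | t.weight ≤ k + 1}, IsBasic r b → ∀ a, IsBasic r a →
      r b a → a.weight + b.weight = k + 1 → ⁅a.eval, b.eval⁆ ∈ K := fun b hb =>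
    ((finite_setOf_weight_le (k + 1)).wellFoundedOn (r := Function.swap r)).induction hb
      (P := fun b => IsBasic r b → ∀ a, IsBasic r a → r b a → a.weight + b.weight = k + 1 →
        ⁅a.eval, b.eval⁆ ∈ K) fun b _ ih hb a ha hba hab => by
      refine commutator_eval_mem_closure_basicSet_sup_of_forall_rel hwt hall hb
        (fun x y hx hy hbx hby hxy => ?_) ha hba hab
      exact commutator_eval_mem_of_trichotomous
        (fun h => ih x (show x.weight ≤ k + 1 by omega) hbx hx y hy h (by omega))
        (fun h => ih y (show y.weight ≤ k + 1 by omega) hby hy x hx h hxy)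
  exact commutator_eval_mem_of_trichotomous
    (fun h => key a (show a.weight ≤ k + 1 by omega) ha b hb h (by omega))
    (fun h => key b (show b.weight ≤ k + 1 by omega) hb a ha h hab)

theorem lowerCentralSeries_le_closure_basicSet_sup_of_finite [Finite X]
    (hwt : ∀ a b : FormalComm X, a.weight < b.weight → r a b) (k : ℕ) :
    γ k ≤ closure (basicSet r {k + 1}) ⊔ γ (k + 1) := by
  induction k using Nat.strong_induction_on with
  | _ k hall =>
  cases k with
  | zero =>
    refine le_sup_of_le_left ?_
    rw [Subgroup.lowerCentralSeries_zero, ← FreeGroup.closure_range_of]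
    exact closure_mono fun _ ⟨x, hx⟩ => hx ▸ eval_mem_basicSet (.of x) rfl
  | succ j =>
    have hγ : γ (j + 1 + 1) ≤ closure (basicSet r {j + 1 + 1}) ⊔ γ (j + 1 + 1) := le_sup_right
    calc γ (j + 1) = ⁅γ j, γ 0⁆ := rfl
      _ ≤ ⁅closure (basicSet r {j + 1} ∪ γ (j + 1)), closure (Set.range FreeGroup.of)⁆ := by
        rw [Subgroup.closure_union, closure_eq, FreeGroup.closure_range_of]
        exact commutator_mono (hall j (by omega)) le_rfl
      _ ≤ _ := by
        refine commutator_closure_le (A := γ j) (B := γ 0) ?_ (fun _ _ => mem_top _)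
          ((commutator_commutator_lowerCentralSeries_le (by omega)).trans hγ)
          ((commutator_commutator_lowerCentralSeries_le (by omega)).trans hγ) ?_
        · exact Set.union_subset (subset_closure.trans
            (closure_basicSet_le (by simp only [Set.mem_singleton_iff, forall_eq]; omega)))
            (Subgroup.lowerCentralSeries_antitone _ (by omega))
        · rintro _ (⟨β, ⟨hβ, hw⟩, rfl⟩ | hx) _ ⟨x, rfl⟩
          · exact commutator_eval_mem_closure_basicSet_sup (b := of x) hwt hall hβ (.of x) (by
              simp only [Set.mem_singleton_iff] at hw; simp only [weight]; omega)
          · exact hγ (commutator_mem_commutator hx (mem_top _))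

theorem lowerCentralSeries_le_closure_basicSet_sup
    (hwt : ∀ a b : FormalComm X, a.weight < b.weight → r a b) (k : ℕ) :
    γ k ≤ closure (basicSet r {k + 1}) ⊔ γ (k + 1) := by
  intro g hg
  obtain ⟨s, g₀, rfl⟩ := FreeGroup.exists_finset_mem_range_map g
  obtain ⟨ρ, hρ⟩ := FreeGroup.exists_leftInverse_map_subtype_val s
  have : IsStrictTotalOrder (FormalComm s) (map (↑) ⁻¹'o r) :=
    { toTrichotomous := InvImage.trichotomous (map_injective Subtype.val_injective) }
  have hg₀ := lowerCentralSeries_le_closure_basicSet_sup_of_finite (r := map (↑) ⁻¹'o r)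
    (fun a b h => hwt _ _ (by simpa using h)) k (mem_lowerCentralSeries_of_leftInverse hρ hg)
  have := mem_map_of_mem (FreeGroup.map ((↑) : s → X)) hg₀
  rw [Subgroup.map_sup, MonoidHom.map_closure] at this
  exact sup_le_sup (closure_mono (image_map_basicSet_subset _ r _))
    (map_lowerCentralSeries_top_le _ _) this

theorem lowerCentralSeries_le_closure_basicSet_Icc_sup
    (hwt : ∀ a b : FormalComm X, a.weight < b.weight → r a b) (c j : ℕ) :
    γ c ≤ closure (basicSet r (Set.Icc (c + 1) (c + j))) ⊔ γ (c + j) := by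
  induction j with
  | zero => exact le_sup_right
  | succ j ih =>
    refine ih.trans (sup_le (le_sup_of_le_left (closure_mono (basicSet_mono ?_))) ?_)
    · exact Set.Icc_subset_Icc le_rfl (by omega)
    · refine (lowerCentralSeries_le_closure_basicSet_sup hwt (c + j)).trans
        (sup_le_sup (closure_mono (basicSet_mono ?_)) le_rfl)
      simp only [Set.singleton_subset_iff, Set.mem_Icc]
      omega

theorem closure_image2_basicSet_le (hwt : ∀ a b : FormalComm X, a.weight < b.weight → r a b)
    {c₁ c₂ n : ℕ} (hc : c₂ ≤ c₁) :
    closure (Set.image2 (⁅·, ·⁆) (basicSet r (Set.Icc (c₁ + 1) (c₁ + n)))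
      (basicSet r (Set.Icc (c₂ + 1) (c₂ + n)))) ≤ closure (basicCommutatorSet r c₁ c₂ n) := by
  rw [closure_le]
  rintro _ ⟨_, ⟨β, ⟨hβ, hβ₁, hβ₂⟩, rfl⟩, _, ⟨α, ⟨hα, hα₁, hα₂⟩, rfl⟩, rfl⟩
  refine commutator_eval_mem_of_trichotomous (r := r)
    (fun h => subset_closure ?_) (fun h => subset_closure ?_)
  · have := weight_le_of_rel hwt h
    exact ⟨α, β, rfl, hα, hβ, h, by omega, by omega, by omega, by omega⟩
  · exact ⟨β, α, rfl, hβ, hα, h, hβ₁, hβ₂, hα₁, hα₂⟩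

theorem commutator_lowerCentralSeries_le_closure_image2_sup
    (hwt : ∀ a b : FormalComm X, a.weight < b.weight → r a b) {c₁ c₂ n : ℕ} (hc : c₂ ≤ c₁)
    (hnc : n ≤ c₂ + 1) :
    ⁅γ c₁, γ c₂⁆ ≤ closure (Set.image2 (⁅·, ·⁆) (basicSet r (Set.Icc (c₁ + 1) (c₁ + n)))
      (basicSet r (Set.Icc (c₂ + 1) (c₂ + n)))) ⊔ (⁅γ (c₁ + n), γ c₂⁆ ⊔ ⁅γ (c₂ + n), γ c₁⁆) := by
  set P₁ := basicSet r (Set.Icc (c₁ + 1) (c₁ + n))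
  set P₂ := basicSet r (Set.Icc (c₂ + 1) (c₂ + n))
  set K := closure (Set.image2 (⁅·, ·⁆) P₁ P₂) ⊔ (⁅γ (c₁ + n), γ c₂⁆ ⊔ ⁅γ (c₂ + n), γ c₁⁆)
  have hH₁ : ⁅γ (c₁ + n), γ c₂⁆ ≤ K := le_sup_left.trans le_sup_right
  have hH₂ : ⁅γ (c₂ + n), γ c₁⁆ ≤ K := le_sup_right.trans le_sup_right
  have hgen : ∀ c, basicSet r (Set.Icc (c + 1) (c + n)) ∪ γ (c + n) ⊆ γ c := fun c =>
    Set.union_subset (subset_closure.trans (closure_basicSet_le fun _ hw => hw.1))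
      (Subgroup.lowerCentralSeries_antitone _ (by omega))
  calc ⁅γ c₁, γ c₂⁆ ≤ ⁅closure (P₁ ∪ γ (c₁ + n)), closure (P₂ ∪ γ (c₂ + n))⁆ := by
        rw [Subgroup.closure_union, Subgroup.closure_union, closure_eq, closure_eq]
        exact commutator_mono (lowerCentralSeries_le_closure_basicSet_Icc_sup hwt c₁ n)
          (lowerCentralSeries_le_closure_basicSet_Icc_sup hwt c₂ n)
    _ ≤ K := by
      refine commutator_closure_le (hgen c₁) (hgen c₂)
        ((commutator_mono ((commutator_lowerCentralSeries_le c₁ c₂).trans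
          (Subgroup.lowerCentralSeries_antitone _ (by omega))) le_rfl).trans hH₂)
        ((commutator_mono ((commutator_lowerCentralSeries_le c₁ c₂).trans
          (Subgroup.lowerCentralSeries_antitone _ (by omega))) le_rfl).trans hH₁) ?_
      rintro x hx y (hy | hy)
      · rcases hx with hx | hx
        · exact mem_sup_left (subset_closure (Set.mem_image2_of_mem hx hy))
        · exact hH₁ (commutator_mem_commutator hx (hgen c₂ (Or.inl hy)))
      · exact hH₂ ((commutator_comm _ _).le (commutator_mem_commutator (hgen c₁ hx) hy))

end FormalComm

theorem commutator_gamma_generated_mod_H_general {X : Type}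
    (r : FormalComm X → FormalComm X → Prop)
    (hr : IsStrictTotalOrder (FormalComm X) r)
    (hwt : ∀ a b : FormalComm X, a.weight < b.weight → r a b)
    (c₁ c₂ n : ℕ) (hc : c₂ ≤ c₁) (hnc : n ≤ c₂ + 1) :
    let F := FreeGroup X
    let H : Subgroup F :=
      ⁅(⊤ : Subgroup F).lowerCentralSeries (c₁ + n), (⊤ : Subgroup F).lowerCentralSeries c₂⁆ ⊔
        ⁅(⊤ : Subgroup F).lowerCentralSeries (c₂ + n), (⊤ : Subgroup F).lowerCentralSeries c₁⁆
    let S : Set F := {g | ∃ β α : FormalComm X,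
      g = ⁅β.eval, α.eval⁆ ∧ FormalComm.IsBasic r β ∧ FormalComm.IsBasic r α ∧ r α β ∧
      c₁ + 1 ≤ β.weight ∧ β.weight ≤ c₁ + n ∧ c₂ + 1 ≤ α.weight ∧ α.weight ≤ c₂ + n}
    ⁅(⊤ : Subgroup F).lowerCentralSeries c₁, (⊤ : Subgroup F).lowerCentralSeries c₂⁆ ⊔ H = Subgroup.closure S ⊔ H := by
  intro F H S
  have := hr
  refine le_antisymm (sup_le ?_ le_sup_right) (sup_le_sup_right ?_ H)
  · exact (FormalComm.commutator_lowerCentralSeries_le_closure_image2_sup hwt hc hnc).trans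
      (sup_le_sup_right (FormalComm.closure_image2_basicSet_le hwt hc) H)
  · exact FormalComm.closure_basicCommutatorSet_le c₁ c₂ n

/-- Lemma 2.6: for a free group `F` on `X` and `n - 1 ≤ c₂ ≤ c₁`, the subgroup
`[γ_{c₁+1}(F), γ_{c₂+1}(F)]` is generated, modulo
`H = [γ_{c₁+n+1}(F), γ_{c₂+1}(F)]·[γ_{c₂+n+1}(F), γ_{c₁+1}(F)]`, by the commutators
`[β,α]` with `β > α` basic, `c₁+1 ≤ wt(β) ≤ c₁+n`, `c₂+1 ≤ wt(α) ≤ c₂+n`. -/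
theorem commutator_gamma_generated_mod_H {X : Type}
    (r : FormalComm X → FormalComm X → Prop)
    (hr : IsStrictTotalOrder (FormalComm X) r)
    (hwt : ∀ a b : FormalComm X, a.weight < b.weight → r a b)
    (c₁ c₂ n : ℕ) (hc : c₂ ≤ c₁) (hc₂ : 1 ≤ c₂) (hn : 1 ≤ n) (hnc : n ≤ c₂ + 1) :
    let F := FreeGroup X
    let H : Subgroup F :=
      ⁅(⊤ : Subgroup F).lowerCentralSeries (c₁ + n), (⊤ : Subgroup F).lowerCentralSeries c₂⁆ ⊔
        ⁅(⊤ : Subgroup F).lowerCentralSeries (c₂ + n), (⊤ : Subgroup F).lowerCentralSeries c₁⁆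
    let S : Set F := {g | ∃ β α : FormalComm X,
      g = ⁅β.eval, α.eval⁆ ∧ FormalComm.IsBasic r β ∧ FormalComm.IsBasic r α ∧ r α β ∧
      c₁ + 1 ≤ β.weight ∧ β.weight ≤ c₁ + n ∧ c₂ + 1 ≤ α.weight ∧ α.weight ≤ c₂ + n}
    ⁅(⊤ : Subgroup F).lowerCentralSeries c₁, (⊤ : Subgroup F).lowerCentralSeries c₂⁆ ⊔ H = Subgroup.closure S ⊔ H :=
  commutator_gamma_generated_mod_H_general r hr hwt c₁ c₂ n hc hnc
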